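/- arXiv:1106.5203 — 5 statements merged into one kernel-verified Lean document; each statement's English description precedes it below -/
import Mathlib

section
/- Fix an s-regular summation method. Suppose that for every datum (μ, U, A, φ) of the reduced rank-two commutator setting in which, moreover, φ coincides μ-almost everywhere with some continuous function on 𝕋, the net W₋(α) converges in the weak operator topology along atTop on E. Then for every datum (μ, U, A, φ) of the reduced rank-two commutator setting (with arbitrary real-valued φ ∈ L²(μ)), the net W₋(α) converges in the weak operator topology along atTop on E. -/
open MeasureTheory Filter Topology ComplexConjugate

noncomputable section

instance : MeasurableSpace Circle := borel Circle
instance : BorelSpace Circle := ⟨rfl⟩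

/-- An s-regular summation method indexed by a linearly ordered set `E`:
nonnegative weights `p α n` with unit sum for each `α`, total variation
`Σₙ |p α n - p α (n+1)|` tending to `0` along `atTop`, and each weight
`p α n` tending to `0` along `atTop`. -/
structure SRegular (E : Type*) [LinearOrder E] where
  p : E → ℕ → ℝ
  nonneg : ∀ α n, 0 ≤ p α n
  hasSum_one : ∀ α, HasSum (p α) 1
  tendsto_variation : Tendsto (fun α => ∑' n, |p α n - p α (n + 1)|) atTop (𝓝 0)
  tendsto_eval : ∀ n, Tendsto (fun α => p α n) atTop (𝓝 0)

/-- The future averaged wave operator `W₊(α) = Σₙ p_{α,n} U⁻ⁿ A Uⁿ`. -/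
def Wplus {E : Type*} [LinearOrder E] {H : Type*} [NormedAddCommGroup H]
    [InnerProductSpace ℂ H] [CompleteSpace H]
    (S : SRegular E) (U : unitary (H →L[ℂ] H)) (A : H →L[ℂ] H) (α : E) : H →L[ℂ] H :=
  ∑' n : ℕ, S.p α n •
    (((U ^ (-(n : ℤ)) : unitary (H →L[ℂ] H)) : H →L[ℂ] H) ∘L A ∘L
      ((U ^ (n : ℤ) : unitary (H →L[ℂ] H)) : H →L[ℂ] H))

/-- The past averaged wave operator `W₋(α) = Σₙ p_{α,n} Uⁿ A U⁻ⁿ`. -/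
def Wminus {E : Type*} [LinearOrder E] {H : Type*} [NormedAddCommGroup H]
    [InnerProductSpace ℂ H] [CompleteSpace H]
    (S : SRegular E) (U : unitary (H →L[ℂ] H)) (A : H →L[ℂ] H) (α : E) : H →L[ℂ] H :=
  ∑' n : ℕ, S.p α n •
    (((U ^ (n : ℤ) : unitary (H →L[ℂ] H)) : H →L[ℂ] H) ∘L A ∘L
      ((U ^ (-(n : ℤ)) : unitary (H →L[ℂ] H)) : H →L[ℂ] H))

/-- The constant function `1` as an element of `L²(μ)`. -/
def oneLp (μ : Measure Circle) [IsFiniteMeasure μ] : Lp ℂ 2 μ :=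
  MemLp.toLp (fun _ => (1 : ℂ)) (memLp_const 1)

/-!
By Lusin's theorem `φ` is continuous on a closed set `K` carrying all but an arbitrarily small part
of `μ`. Extension by zero `J : L²(μ|_K) → L²(μ)` intertwines multiplication by `z`, so
`(μ|_K, z·, J⋆AJ, J⋆φ)` is again a datum, now with a continuous symbol, and
`⟪W₋(α)(J f₁), J f₂⟫` is a matrix coefficient of its wave operator; these converge by hypothesis.
As `‖W₋(α)‖ ≤ ‖A‖` for all `α`, and `J J⋆ h = 𝟙_K h` is close to `h`, every matrix coefficient of
`W₋(α)` is then Cauchy, and the Riesz representation theorem turns the limits into an operator.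
-/

open scoped ENNReal InnerProductSpace BoundedContinuousFunction

theorem exists_tendsto_of_forall_dist_le {ι X : Type*} [PseudoMetricSpace X] [CompleteSpace X]
    {l : Filter ι} [l.NeBot] {f : ι → X}
    (h : ∀ ε > 0, ∃ g : ι → X, (∃ c, Tendsto g l (𝓝 c)) ∧ ∀ i, dist (f i) (g i) ≤ ε) :
    ∃ c, Tendsto f l (𝓝 c) := by
  refine CompleteSpace.complete (Metric.cauchy_iff.2 ⟨map_neBot, fun ε hε => ?_⟩)
  obtain ⟨g, ⟨c, hc⟩, hfg⟩ := h (ε / 4) (by positivity)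
  refine ⟨f '' {i | dist (g i) c < ε / 4},
    image_mem_map (hc (Metric.ball_mem_nhds c (by positivity))), ?_⟩
  rintro _ ⟨i, hi, rfl⟩ _ ⟨j, hj, rfl⟩
  have hi' : dist (g i) c < ε / 4 := hi
  have hj' : dist c (g j) < ε / 4 := by rw [dist_comm]; exact hj
  have hfj : dist (g j) (f j) ≤ ε / 4 := by rw [dist_comm]; exact hfg j
  linarith [dist_triangle4 (f i) (g i) c (g j), dist_triangle (f i) (g j) (f j), hfg i]

section BoundedNet

variable {𝕜 H ι : Type*} [RCLike 𝕜] [NormedAddCommGroup H] [InnerProductSpace 𝕜 H]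
  {l : Filter ι} {T : ι → H →L[𝕜] H} {C : ℝ}

theorem norm_inner_apply_le_of_norm_le (hT : ∀ i, ‖T i‖ ≤ C) (i : ι) (x y : H) :
    ‖⟪T i x, y⟫_𝕜‖ ≤ C * ‖x‖ * ‖y‖ :=
  (norm_inner_le_norm _ _).trans <| by
    gcongr; exact (T i).le_of_opNorm_le (hT i) x

theorem exists_tendsto_inner_of_forall_approx [l.NeBot] (hT : ∀ i, ‖T i‖ ≤ C) (x y : H)
    (h : ∀ ε > 0, ∃ x' y' : H, ‖x - x'‖ ≤ ε ∧ ‖y - y'‖ ≤ ε ∧ ‖x'‖ ≤ ‖x‖ ∧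
      ∃ c, Tendsto (fun i => ⟪T i x', y'⟫_𝕜) l (𝓝 c)) :
    ∃ c, Tendsto (fun i => ⟪T i x, y⟫_𝕜) l (𝓝 c) := by
  obtain ⟨i₀⟩ := l.nonempty_of_neBot
  have hC : 0 ≤ C := (norm_nonneg _).trans (hT i₀)
  refine exists_tendsto_of_forall_dist_le fun ε hε => ?_
  set δ := ε / (C * (‖x‖ + ‖y‖) + 1)
  obtain ⟨x', y', hx, hy, hx', hconv⟩ := h δ (by positivity)
  refine ⟨_, hconv, fun i => ?_⟩
  have split : ⟪T i x, y⟫_𝕜 - ⟪T i x', y'⟫_𝕜 = ⟪T i (x - x'), y⟫_𝕜 + ⟪T i x', y - y'⟫_𝕜 := by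
    rw [map_sub, inner_sub_left, inner_sub_right]; ring
  calc dist ⟪T i x, y⟫_𝕜 ⟪T i x', y'⟫_𝕜
      ≤ C * ‖x - x'‖ * ‖y‖ + C * ‖x'‖ * ‖y - y'‖ := by
        rw [dist_eq_norm, split]
        exact (norm_add_le _ _).trans (add_le_add (norm_inner_apply_le_of_norm_le hT i _ _)
          (norm_inner_apply_le_of_norm_le hT i _ _))
    _ ≤ C * δ * ‖y‖ + C * ‖x‖ * δ := by gcongr
    _ = δ * (C * (‖x‖ + ‖y‖)) := by ring
    _ ≤ ε := by
        rw [div_mul_eq_mul_div, div_le_iff₀ (by positivity)]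
        nlinarith [mul_nonneg hC (add_nonneg (norm_nonneg x) (norm_nonneg y))]

theorem exists_forall_tendsto_inner_of_forall_exists [CompleteSpace H] (hT : ∀ i, ‖T i‖ ≤ C)
    (h : ∀ x y : H, ∃ c, Tendsto (fun i => ⟪T i x, y⟫_𝕜) l (𝓝 c)) :
    ∃ W : H →L[𝕜] H, ∀ x y, Tendsto (fun i => ⟪T i x, y⟫_𝕜) l (𝓝 ⟪W x, y⟫_𝕜) := by
  rcases l.eq_or_neBot with rfl | _
  · exact ⟨0, fun _ _ => tendsto_bot⟩
  choose B hB using h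
  let Bₗ : H →ₗ⋆[𝕜] H →ₗ[𝕜] 𝕜 := LinearMap.mk₂'ₛₗ (starRingEnd 𝕜) (RingHom.id 𝕜) B
    (fun x x' y => tendsto_nhds_unique (hB (x + x') y) <| by
      simpa only [map_add, inner_add_left] using (hB x y).add (hB x' y))
    (fun c x y => tendsto_nhds_unique (hB (c • x) y) <| by
      simpa only [map_smul, inner_smul_left, smul_eq_mul] using
        (hB x y).const_mul (starRingEnd 𝕜 c))
    (fun x y y' => tendsto_nhds_unique (hB x (y + y')) <| by
      simpa only [inner_add_right] using (hB x y).add (hB x y'))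
    (fun c x y => tendsto_nhds_unique (hB x (c • y)) <| by
      simpa only [inner_smul_right, smul_eq_mul, RingHom.id_apply] using (hB x y).const_mul c)
  let Bc : H →L⋆[𝕜] H →L[𝕜] 𝕜 := Bₗ.mkContinuous₂ C fun x y =>
    le_of_tendsto (hB x y).norm
      (Eventually.of_forall fun i => norm_inner_apply_le_of_norm_le hT i x y)
  refine ⟨InnerProductSpace.continuousLinearMapOfBilin Bc, fun x y => ?_⟩
  rw [InnerProductSpace.continuousLinearMapOfBilin_apply]
  exact hB x y

end BoundedNet

section Intertwining

variable {H H' : Type*} [NormedAddCommGroup H] [InnerProductSpace ℂ H] [CompleteSpace H]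
  [NormedAddCommGroup H'] [InnerProductSpace ℂ H'] [CompleteSpace H']
  {U : unitary (H →L[ℂ] H)} {V : unitary (H' →L[ℂ] H')} {J : H' →L[ℂ] H}

theorem inv_comp_eq_comp_inv (hJ : (U : H →L[ℂ] H) ∘L J = J ∘L V) :
    ((U⁻¹ : unitary (H →L[ℂ] H)) : H →L[ℂ] H) ∘L J =
      J ∘L ((V⁻¹ : unitary (H' →L[ℂ] H')) : H' →L[ℂ] H') :=
  calc _ = ((U⁻¹ : unitary (H →L[ℂ] H)) : H →L[ℂ] H) ∘L J ∘L
        ((V * V⁻¹ : unitary (H' →L[ℂ] H')) : H' →L[ℂ] H') := by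
        rw [mul_inv_cancel]; rfl
    _ = ((U⁻¹ * U : unitary (H →L[ℂ] H)) : H →L[ℂ] H) ∘L J ∘L
        ((V⁻¹ : unitary (H' →L[ℂ] H')) : H' →L[ℂ] H') := by
        simp only [Submonoid.coe_mul, ContinuousLinearMap.mul_def, ContinuousLinearMap.comp_assoc]
        rw [← ContinuousLinearMap.comp_assoc J, ← hJ, ContinuousLinearMap.comp_assoc]
    _ = _ := by rw [inv_mul_cancel]; rfl

theorem zpow_comp_eq_comp_zpow (hJ : (U : H →L[ℂ] H) ∘L J = J ∘L V) (k : ℤ) :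
    ((U ^ k : unitary (H →L[ℂ] H)) : H →L[ℂ] H) ∘L J =
      J ∘L ((V ^ k : unitary (H' →L[ℂ] H')) : H' →L[ℂ] H') := by
  induction k using Int.induction_on with
  | zero => rfl
  | succ k ih =>
    rw [zpow_add_one, zpow_add_one, Submonoid.coe_mul, Submonoid.coe_mul,
      ContinuousLinearMap.mul_def, ContinuousLinearMap.mul_def, ContinuousLinearMap.comp_assoc, hJ,
      ← ContinuousLinearMap.comp_assoc, ih, ContinuousLinearMap.comp_assoc]
  | pred k ih =>
    rw [zpow_sub_one, zpow_sub_one, Submonoid.coe_mul, Submonoid.coe_mul,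
      ContinuousLinearMap.mul_def, ContinuousLinearMap.mul_def, ContinuousLinearMap.comp_assoc,
      inv_comp_eq_comp_inv hJ, ← ContinuousLinearMap.comp_assoc, ih,
      ContinuousLinearMap.comp_assoc]

theorem adjoint_comp_zpow_eq_zpow_comp_adjoint (hJ : (U : H →L[ℂ] H) ∘L J = J ∘L V) (k : ℤ) :
    J.adjoint ∘L ((U ^ k : unitary (H →L[ℂ] H)) : H →L[ℂ] H) =
      ((V ^ k : unitary (H' →L[ℂ] H')) : H' →L[ℂ] H') ∘L J.adjoint := by
  simpa only [ContinuousLinearMap.adjoint_comp, ← ContinuousLinearMap.star_eq_adjoint,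
    ← Unitary.coe_star, Unitary.star_eq_inv, zpow_neg, inv_inv] using
    congrArg ContinuousLinearMap.adjoint (zpow_comp_eq_comp_zpow hJ (-k))

theorem adjoint_comp_comp_sub_comm (hJ : (U : H →L[ℂ] H) ∘L J = J ∘L V) {A : H →L[ℂ] H}
    {φ e : H} (hA : ∀ h, A ((U : H →L[ℂ] H) h) - (U : H →L[ℂ] H) (A h) =
      ⟪φ, h⟫_ℂ • e - ⟪e, h⟫_ℂ • φ) (h : H') :
    (J.adjoint ∘L A ∘L J) ((V : H' →L[ℂ] H') h) - (V : H' →L[ℂ] H') ((J.adjoint ∘L A ∘L J) h)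
      = ⟪J.adjoint φ, h⟫_ℂ • J.adjoint e - ⟪J.adjoint e, h⟫_ℂ • J.adjoint φ := by
  have hU : J ((V : H' →L[ℂ] H') h) = (U : H →L[ℂ] H) (J h) := congr($hJ h).symm
  have hV : (V : H' →L[ℂ] H') (J.adjoint (A (J h))) =
      J.adjoint ((U : H →L[ℂ] H) (A (J h))) := by
    simpa using congr($(adjoint_comp_zpow_eq_zpow_comp_adjoint hJ 1) (A (J h))).symm
  simp only [ContinuousLinearMap.comp_apply]
  rw [hU, hV, ← map_sub, hA, map_sub, map_smul, map_smul, ContinuousLinearMap.adjoint_inner_left,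
    ContinuousLinearMap.adjoint_inner_left]

end Intertwining

section Wminus

variable {E H : Type*} [LinearOrder E] [NormedAddCommGroup H] [InnerProductSpace ℂ H]
  [CompleteSpace H] (S : SRegular E) (U : unitary (H →L[ℂ] H)) (A : H →L[ℂ] H) (α : E)

theorem norm_unitary_comp_comp_unitary (V W : unitary (H →L[ℂ] H)) :
    ‖(V : H →L[ℂ] H) ∘L A ∘L (W : H →L[ℂ] H)‖ = ‖A‖ :=
  (CStarRing.norm_coe_unitary_mul V _).trans (CStarRing.norm_mul_coe_unitary A W)

theorem norm_smul_unitary_comp_comp_unitary (n : ℕ) :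
    ‖S.p α n • (((U ^ (n : ℤ) : unitary (H →L[ℂ] H)) : H →L[ℂ] H) ∘L A ∘L
      ((U ^ (-(n : ℤ)) : unitary (H →L[ℂ] H)) : H →L[ℂ] H))‖ = S.p α n * ‖A‖ := by
  rw [norm_smul, norm_unitary_comp_comp_unitary, Real.norm_of_nonneg (S.nonneg α n)]

theorem hasSum_Wminus : HasSum (fun n : ℕ => S.p α n •
    (((U ^ (n : ℤ) : unitary (H →L[ℂ] H)) : H →L[ℂ] H) ∘L A ∘L
      ((U ^ (-(n : ℤ)) : unitary (H →L[ℂ] H)) : H →L[ℂ] H))) (Wminus S U A α) :=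
  (Summable.of_norm_bounded ((S.hasSum_one α).summable.mul_right ‖A‖)
    fun n => (norm_smul_unitary_comp_comp_unitary S U A α n).le).hasSum

theorem norm_Wminus_le : ‖Wminus S U A α‖ ≤ ‖A‖ := by
  simpa using (hasSum_Wminus S U A α).norm_le_of_bounded ((S.hasSum_one α).mul_right ‖A‖)
    fun n => (norm_smul_unitary_comp_comp_unitary S U A α n).le

variable {H' : Type*} [NormedAddCommGroup H'] [InnerProductSpace ℂ H'] [CompleteSpace H']
  {V : unitary (H' →L[ℂ] H')} {J : H' →L[ℂ] H}

theorem Wminus_adjoint_comp_comp (hJ : (U : H →L[ℂ] H) ∘L J = J ∘L V) :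
    Wminus S V (J.adjoint ∘L A ∘L J) α = J.adjoint ∘L Wminus S U A α ∘L J := by
  let Φ : (H →L[ℂ] H) →L[ℂ] H' →L[ℂ] H' :=
    ContinuousLinearMap.compL ℂ H' H H' J.adjoint ∘L (ContinuousLinearMap.compL ℂ H' H H).flip J
  refine (hasSum_Wminus S V _ α).unique ?_
  convert (hasSum_Wminus S U A α).mapL Φ using 1
  · ext1 n
    simp only [Φ, ContinuousLinearMap.coe_comp, Function.comp_apply,
      ContinuousLinearMap.flip_apply, ContinuousLinearMap.compL_apply,
      ContinuousLinearMap.smul_comp, ContinuousLinearMap.comp_smul]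
    simp only [ContinuousLinearMap.comp_assoc, zpow_comp_eq_comp_zpow hJ]
    simp only [← ContinuousLinearMap.comp_assoc, adjoint_comp_zpow_eq_zpow_comp_adjoint hJ]
  · rfl

theorem inner_Wminus_adjoint_comp_comp (hJ : (U : H →L[ℂ] H) ∘L J = J ∘L V) (x y : H') :
    ⟪Wminus S V (J.adjoint ∘L A ∘L J) α x, y⟫_ℂ = ⟪Wminus S U A α (J x), J y⟫_ℂ := by
  rw [Wminus_adjoint_comp_comp S U A α hJ, ContinuousLinearMap.comp_apply,
    ContinuousLinearMap.comp_apply, ContinuousLinearMap.adjoint_inner_left]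

end Wminus

namespace MeasureTheory.Lp

theorem eq_zero_of_measure_eq_zero {X E : Type*} [MeasurableSpace X] [NormedAddCommGroup E]
    {p : ℝ≥0∞} {ν : Measure X} (hν : ν = 0) (f : Lp E p ν) : f = 0 := by
  subst hν
  exact Lp.eq_zero_iff_ae_eq_zero.2 (by simp [EventuallyEq])

section ExtendByZero

variable {X E 𝕜 : Type*} [MeasurableSpace X] {μ : Measure X} [NormedAddCommGroup E]
  [NormedField 𝕜] [NormedSpace 𝕜 E] {p : ℝ≥0∞} [Fact (1 ≤ p)] {s : Set X}

variable (𝕜) in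
def extendByZero (hs : MeasurableSet s) : Lp E p (μ.restrict s) →ₗᵢ[𝕜] Lp E p μ where
  toFun f := ((memLp_indicator_iff_restrict hs).2 (Lp.memLp f)).toLp (s.indicator f)
  map_add' f g := by
    rw [← MemLp.toLp_add, MemLp.toLp_eq_toLp_iff, ← Set.indicator_add',
      ← ae_eq_restrict_iff_indicator_ae_eq hs]
    exact Lp.coeFn_add f g
  map_smul' c f := by
    rw [RingHom.id_apply, ← MemLp.toLp_const_smul, MemLp.toLp_eq_toLp_iff]
    exact ((ae_eq_restrict_iff_indicator_ae_eq hs).1 (Lp.coeFn_smul c f)).trans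
      (.of_forall fun x => Set.indicator_const_smul_apply s c _ x)
  norm_map' f := by
    rw [LinearMap.coe_mk, AddHom.coe_mk, Lp.norm_toLp, eLpNorm_indicator_eq_eLpNorm_restrict hs,
      Lp.norm_def]

variable (𝕜) in
theorem coeFn_extendByZero (hs : MeasurableSet s) (f : Lp E p (μ.restrict s)) :
    extendByZero 𝕜 hs f =ᵐ[μ] s.indicator f := by
  change ⇑(((memLp_indicator_iff_restrict hs).2 (Lp.memLp f)).toLp (s.indicator f)) =ᵐ[μ] _
  exact MemLp.coeFn_toLp _

theorem exists_norm_sub_extendByZero_le (hp : p ≠ ∞) (f : Lp E p μ) {ε : ℝ} (hε : 0 < ε) :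
    ∃ η > 0, ∀ s (hs : MeasurableSet s), μ sᶜ ≤ ENNReal.ofReal η →
      ‖f - extendByZero 𝕜 hs (LpToLpRestrictCLM X E 𝕜 μ p s f)‖ ≤ ε := by
  obtain ⟨η, hη, hsmall⟩ := (Lp.memLp f).eLpNorm_indicator_le Fact.out hp hε
  refine ⟨η, hη, fun s hs hμs => ?_⟩
  have hcompl : ⇑(f - extendByZero 𝕜 hs (LpToLpRestrictCLM X E 𝕜 μ p s f)) =ᵐ[μ]
      sᶜ.indicator f := by
    filter_upwards [Lp.coeFn_sub f (extendByZero 𝕜 hs (LpToLpRestrictCLM X E 𝕜 μ p s f)),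
      coeFn_extendByZero 𝕜 hs (LpToLpRestrictCLM X E 𝕜 μ p s f),
      (ae_eq_restrict_iff_indicator_ae_eq hs).1 (LpToLpRestrictCLM_coeFn 𝕜 s f)]
      with x h₁ h₂ h₃
    rw [h₁, Pi.sub_apply, h₂, h₃, Set.indicator_compl, Pi.sub_apply]
  rw [Lp.norm_def, eLpNorm_congr_ae hcompl]
  exact ENNReal.toReal_le_of_le_ofReal hε.le (hsmall _ hs.compl hμs)

end ExtendByZero

section Adjoint

variable {X E 𝕜 : Type*} [MeasurableSpace X] {μ : Measure X} [RCLike 𝕜]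
  [NormedAddCommGroup E] [InnerProductSpace 𝕜 E] {s : Set X}

theorem inner_LpToLpRestrictCLM_left (hs : MeasurableSet s) (f : Lp E 2 μ)
    (g : Lp E 2 (μ.restrict s)) :
    ⟪LpToLpRestrictCLM X E 𝕜 μ 2 s f, g⟫_𝕜 = ⟪f, extendByZero 𝕜 hs g⟫_𝕜 := by
  rw [L2.inner_def, L2.inner_def]
  calc ∫ x in s, ⟪LpToLpRestrictCLM X E 𝕜 μ 2 s f x, g x⟫_𝕜 ∂μ = ∫ x in s, ⟪f x, g x⟫_𝕜 ∂μ :=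
        integral_congr_ae <| by
          filter_upwards [LpToLpRestrictCLM_coeFn 𝕜 s f] with x hx
          rw [hx]
    _ = ∫ x, s.indicator (fun x => ⟪f x, g x⟫_𝕜) x ∂μ := (integral_indicator hs).symm
    _ = ∫ x, ⟪f x, extendByZero 𝕜 hs g x⟫_𝕜 ∂μ := integral_congr_ae <| by
          filter_upwards [coeFn_extendByZero 𝕜 hs g] with x hx
          by_cases hxs : x ∈ s <;> simp [hx, hxs]

variable [CompleteSpace E]

theorem adjoint_extendByZero (hs : MeasurableSet s) :
    (extendByZero 𝕜 hs : Lp E 2 (μ.restrict s) →ₗᵢ[𝕜] Lp E 2 μ).toContinuousLinearMap.adjoint =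
      LpToLpRestrictCLM X E 𝕜 μ 2 s :=
  ((ContinuousLinearMap.eq_adjoint_iff _ _).2 (inner_LpToLpRestrictCLM_left hs)).symm

variable (𝕜) in
theorem coeFn_adjoint_extendByZero (hs : MeasurableSet s) (f : Lp E 2 μ) :
    (extendByZero 𝕜 hs : Lp E 2 (μ.restrict s) →ₗᵢ[𝕜] Lp E 2 μ).toContinuousLinearMap.adjoint f
      =ᵐ[μ.restrict s] f := by
  rw [adjoint_extendByZero]
  exact LpToLpRestrictCLM_coeFn 𝕜 s f

end Adjoint

section CircleSMul

variable {X E : Type*} [MeasurableSpace X] {μ : Measure X} [NormedAddCommGroup E]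
  [NormedSpace ℂ E] {p : ℝ≥0∞} {w : X → Circle}

theorem memLp_circle_smul (hw : Measurable w) (f : Lp E p μ) :
    MemLp (fun x => (w x : ℂ) • f x) p μ :=
  (Lp.memLp f).of_le
    (((by fun_prop : Measurable fun z : Circle => (z : ℂ)).comp hw).aestronglyMeasurable.smul
      (Lp.aestronglyMeasurable f))
    (.of_forall fun x => by rw [norm_smul, Circle.norm_coe, one_mul])

theorem eLpNorm_circle_smul (f : X → E) :
    eLpNorm (fun x => (w x : ℂ) • f x) p μ = eLpNorm f p μ :=
  eLpNorm_congr_norm_ae (.of_forall fun x => by rw [norm_smul, Circle.norm_coe, one_mul])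

variable [Fact (1 ≤ p)]

def circleSMul (hw : Measurable w) : Lp E p μ →ₗᵢ[ℂ] Lp E p μ where
  toFun f := (memLp_circle_smul hw f).toLp _
  map_add' f g := by
    rw [← MemLp.toLp_add, MemLp.toLp_eq_toLp_iff]
    filter_upwards [Lp.coeFn_add f g] with x hx
    simp only [hx, Pi.add_apply, smul_add]
  map_smul' c f := by
    rw [RingHom.id_apply, ← MemLp.toLp_const_smul, MemLp.toLp_eq_toLp_iff]
    filter_upwards [Lp.coeFn_smul c f] with x hx
    simp only [hx, Pi.smul_apply, smul_comm c]
  norm_map' f := by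
    rw [LinearMap.coe_mk, AddHom.coe_mk, Lp.norm_toLp, eLpNorm_circle_smul, Lp.norm_def]

theorem coeFn_circleSMul (hw : Measurable w) (f : Lp E p μ) :
    circleSMul hw f =ᵐ[μ] fun x => (w x : ℂ) • f x := by
  change ⇑((memLp_circle_smul hw f).toLp _) =ᵐ[μ] _
  exact MemLp.coeFn_toLp _

theorem circleSMul_circleSMul_inv (hw : Measurable w) (f : Lp E p μ) :
    circleSMul hw (circleSMul hw.inv f) = f := by
  refine Lp.ext ?_
  filter_upwards [coeFn_circleSMul hw (circleSMul hw.inv f), coeFn_circleSMul hw.inv f]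
    with x h₁ h₂
  rw [h₁, h₂, smul_smul, Pi.inv_apply, ← Circle.coe_mul, mul_inv_cancel, Circle.coe_one, one_smul]

def circleSMulEquiv (hw : Measurable w) : Lp E p μ ≃ₗᵢ[ℂ] Lp E p μ :=
  .ofSurjective (circleSMul hw) fun f => ⟨_, circleSMul_circleSMul_inv hw f⟩

end CircleSMul

/-- Lusin's theorem for `Lp` functions, through Egorov's theorem applied to an a.e. convergent
sequence of bounded continuous approximants. -/
theorem exists_isClosed_measure_compl_le_continuousOn {X E : Type*} [TopologicalSpace X]
    [NormalSpace X] [MeasurableSpace X] [BorelSpace X] [NormedAddCommGroup E] [NormedSpace ℝ E]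
    {μ : Measure X} [IsFiniteMeasure μ] [μ.WeaklyRegular] [SecondCountableTopologyEither X E]
    {p : ℝ≥0∞} [Fact (1 ≤ p)] (hp : p ≠ ∞) (f : Lp E p μ) {ε : ℝ} (hε : 0 < ε) :
    ∃ K, IsClosed K ∧ μ Kᶜ ≤ ENNReal.ofReal ε ∧ ContinuousOn f K := by
  obtain ⟨u, hu⟩ : ∃ u : ℕ → X →ᵇ E,
      Tendsto (fun n => BoundedContinuousFunction.toLp p μ ℝ (u n)) atTop (𝓝 f) := by
    obtain ⟨v, hv, hvf⟩ := mem_closure_iff_seq_limit.1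
      ((BoundedContinuousFunction.toLp_denseRange E μ ℝ hp) f)
    choose u hu using hv
    exact ⟨u, by simpa only [hu] using hvf⟩
  have hmeas : TendstoInMeasure μ (fun n => (u n : X → E)) atTop f :=
    (tendstoInMeasure_of_tendsto_Lp hu).congr_left fun n =>
      BoundedContinuousFunction.coeFn_toLp p μ ℝ (u n)
  obtain ⟨ns, -, hae⟩ := hmeas.exists_seq_tendsto_ae
  obtain ⟨t, ht, hμt, hunif⟩ := tendstoUniformlyOn_of_ae_tendsto'
    (fun n => (u (ns n)).continuous.stronglyMeasurable) (Lp.stronglyMeasurable f) hae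
    (half_pos hε)
  obtain ⟨K, hKt, hK, hμK⟩ := ht.compl.exists_isClosed_sdiff_lt (measure_ne_top μ _)
    (ENNReal.ofReal_pos.2 (half_pos hε)).ne'
  refine ⟨K, hK, ?_, (hunif.continuousOn
    (Frequently.of_forall fun n => (u (ns n)).continuous.continuousOn)).mono hKt⟩
  calc μ Kᶜ ≤ μ t + μ (tᶜ \ K) := by
        refine (measure_mono fun x hx => ?_).trans (measure_union_le t (tᶜ \ K))
        by_cases hxt : x ∈ t
        · exact Or.inl hxt
        · exact Or.inr ⟨hxt, hx⟩
    _ ≤ ENNReal.ofReal (ε / 2) + ENNReal.ofReal (ε / 2) := add_le_add hμt hμK.le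
    _ = ENNReal.ofReal ε := by
        rw [← ENNReal.ofReal_add (half_pos hε).le (half_pos hε).le, add_halves]

end MeasureTheory.Lp

section Circle

variable {μ : Measure Circle} {K : Set Circle}

def mulZ (ν : Measure Circle) : unitary (Lp ℂ 2 ν →L[ℂ] Lp ℂ 2 ν) :=
  Unitary.linearIsometryEquiv.symm (Lp.circleSMulEquiv measurable_id)

theorem coeFn_mulZ (ν : Measure Circle) (h : Lp ℂ 2 ν) :
    ((mulZ ν : Lp ℂ 2 ν →L[ℂ] Lp ℂ 2 ν) h : Circle → ℂ) =ᵐ[ν] fun z => (z : ℂ) * h z :=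
  Lp.coeFn_circleSMul measurable_id h

theorem coeFn_oneLp (μ : Measure Circle) [IsFiniteMeasure μ] : oneLp μ =ᵐ[μ] 1 :=
  MemLp.coeFn_toLp _

theorem LpToLpRestrictCLM_oneLp [IsFiniteMeasure μ] :
    LpToLpRestrictCLM Circle ℂ ℂ μ 2 K (oneLp μ) = oneLp (μ.restrict K) :=
  Lp.ext <| by
    filter_upwards [LpToLpRestrictCLM_coeFn ℂ K (oneLp μ), ae_restrict_of_ae (coeFn_oneLp μ),
      coeFn_oneLp (μ.restrict K)] with z h₁ h₂ h₃
    rw [h₁, h₂, h₃]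

theorem comp_extendByZero_eq_extendByZero_comp_mulZ {U : unitary (Lp ℂ 2 μ →L[ℂ] Lp ℂ 2 μ)}
    (hU : ∀ h : Lp ℂ 2 μ, ((U : Lp ℂ 2 μ →L[ℂ] Lp ℂ 2 μ) h : Circle → ℂ)
      =ᵐ[μ] fun z => (z : ℂ) * (h : Circle → ℂ) z) (hK : MeasurableSet K) :
    (U : Lp ℂ 2 μ →L[ℂ] Lp ℂ 2 μ) ∘L (Lp.extendByZero ℂ hK).toContinuousLinearMap =
      (Lp.extendByZero ℂ hK).toContinuousLinearMap ∘L
        (mulZ (μ.restrict K) : Lp ℂ 2 (μ.restrict K) →L[ℂ] Lp ℂ 2 (μ.restrict K)) := by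
  ext1 f
  refine Lp.ext ?_
  filter_upwards [hU (Lp.extendByZero ℂ hK f), Lp.coeFn_extendByZero ℂ hK f,
    Lp.coeFn_extendByZero ℂ hK
      ((mulZ (μ.restrict K) : Lp ℂ 2 (μ.restrict K) →L[ℂ] Lp ℂ 2 (μ.restrict K)) f),
    (ae_eq_restrict_iff_indicator_ae_eq hK).1 (coeFn_mulZ _ f)] with z h₁ h₂ h₃ h₄
  simp only [ContinuousLinearMap.comp_apply, LinearIsometry.coe_toContinuousLinearMap]
  rw [h₁, h₂, h₃, h₄]
  by_cases hz : z ∈ K <;> simp [hz]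

theorem exists_continuousMap_ae_eq_restrict (hK : IsClosed K) {f : Circle → ℂ}
    (hf : ContinuousOn f K) (hre : ∀ᵐ z ∂μ, (f z).im = 0) :
    ∃ ψ : C(Circle, ℝ), f =ᵐ[μ.restrict K] fun z => (ψ z : ℂ) := by
  obtain ⟨ψ, hψ⟩ := ContinuousMap.exists_restrict_eq hK
    ⟨fun z : K => (f z).re, Complex.continuous_re.comp hf.domRestrict⟩
  refine ⟨ψ, ?_⟩
  filter_upwards [ae_restrict_mem hK.measurableSet, ae_restrict_of_ae hre] with z hzK hz
  have hψz : ψ z = (f z).re := congr($hψ ⟨z, hzK⟩)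
  exact Complex.ext (by simp [hψz]) (by simp [hz])

end Circle

/-- Fix an s-regular summation method. If for every datum
`(μ, U, A, φ)` of the reduced rank-two commutator setting in which `φ` moreover
coincides `μ`-a.e. with a continuous function on the circle the net `W₋(α)`
converges in the weak operator topology, then for every datum of the reduced
rank-two commutator setting (`φ` an arbitrary real-valued `L²(μ)` function) the
net `W₋(α)` converges in the weak operator topology. -/
theorem reduction_to_continuous_symbols
    {E : Type*} [LinearOrder E] [Nonempty E] (S : SRegular E)
    (hyp : ∀ (μ : Measure Circle) [IsFiniteMeasure μ], μ ≠ 0 →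
      μ ⟂ₘ Measure.haar → NoAtoms μ →
      ∀ (U : unitary (Lp ℂ 2 μ →L[ℂ] Lp ℂ 2 μ)),
        (∀ h : Lp ℂ 2 μ, ((U : Lp ℂ 2 μ →L[ℂ] Lp ℂ 2 μ) h : Circle → ℂ)
          =ᵐ[μ] fun z => (z : ℂ) * (h : Circle → ℂ) z) →
      ∀ (φ : Lp ℂ 2 μ), (∀ᵐ z ∂μ, ((φ : Circle → ℂ) z).im = 0) →
        (∃ ψ : C(Circle, ℝ), (φ : Circle → ℂ) =ᵐ[μ] fun z => (ψ z : ℂ)) →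
      ∀ (A : Lp ℂ 2 μ →L[ℂ] Lp ℂ 2 μ),
        (∀ h : Lp ℂ 2 μ,
          A ((U : Lp ℂ 2 μ →L[ℂ] Lp ℂ 2 μ) h) - (U : Lp ℂ 2 μ →L[ℂ] Lp ℂ 2 μ) (A h)
            = (inner ℂ φ h : ℂ) • oneLp μ - (inner ℂ (oneLp μ) h : ℂ) • φ) →
      ∃ W : Lp ℂ 2 μ →L[ℂ] Lp ℂ 2 μ,
        ∀ h₁ h₂ : Lp ℂ 2 μ, Tendsto (fun α => (inner ℂ (Wminus S U A α h₁) h₂ : ℂ))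
          atTop (𝓝 (inner ℂ (W h₁) h₂ : ℂ))) :
    ∀ (μ : Measure Circle) [IsFiniteMeasure μ], μ ≠ 0 →
      μ ⟂ₘ Measure.haar → NoAtoms μ →
      ∀ (U : unitary (Lp ℂ 2 μ →L[ℂ] Lp ℂ 2 μ)),
        (∀ h : Lp ℂ 2 μ, ((U : Lp ℂ 2 μ →L[ℂ] Lp ℂ 2 μ) h : Circle → ℂ)
          =ᵐ[μ] fun z => (z : ℂ) * (h : Circle → ℂ) z) →
      ∀ (φ : Lp ℂ 2 μ), (∀ᵐ z ∂μ, ((φ : Circle → ℂ) z).im = 0) →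
      ∀ (A : Lp ℂ 2 μ →L[ℂ] Lp ℂ 2 μ),
        (∀ h : Lp ℂ 2 μ,
          A ((U : Lp ℂ 2 μ →L[ℂ] Lp ℂ 2 μ) h) - (U : Lp ℂ 2 μ →L[ℂ] Lp ℂ 2 μ) (A h)
            = (inner ℂ φ h : ℂ) • oneLp μ - (inner ℂ (oneLp μ) h : ℂ) • φ) →
      ∃ W : Lp ℂ 2 μ →L[ℂ] Lp ℂ 2 μ,
        ∀ h₁ h₂ : Lp ℂ 2 μ, Tendsto (fun α => (inner ℂ (Wminus S U A α h₁) h₂ : ℂ))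
          atTop (𝓝 (inner ℂ (W h₁) h₂ : ℂ)) := by
  intro μ _ _ hsing hna U hU φ hφ A hcomm
  have hlocal : ∀ K (hK : IsClosed K) (ψ : C(Circle, ℝ)),
      (φ : Circle → ℂ) =ᵐ[μ.restrict K] (fun z => (ψ z : ℂ)) → ∀ f₁ f₂ : Lp ℂ 2 (μ.restrict K),
      ∃ c, Tendsto (fun α => ⟪Wminus S U A α (Lp.extendByZero ℂ hK.measurableSet f₁),
        Lp.extendByZero ℂ hK.measurableSet f₂⟫_ℂ) atTop (𝓝 c) := by
    intro K hK ψ hψ f₁ f₂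
    by_cases hν : μ.restrict K = 0
    · exact ⟨0, by simp [Lp.eq_zero_of_measure_eq_zero hν f₁]⟩
    set J : Lp ℂ 2 (μ.restrict K) →L[ℂ] Lp ℂ 2 μ :=
      (Lp.extendByZero ℂ hK.measurableSet).toContinuousLinearMap
    have hJ := comp_extendByZero_eq_extendByZero_comp_mulZ hU hK.measurableSet
    have hJφ := Lp.coeFn_adjoint_extendByZero ℂ hK.measurableSet φ
    have hre : ∀ᵐ z ∂μ.restrict K, ((J.adjoint φ : Circle → ℂ) z).im = 0 := by
      filter_upwards [hJφ, ae_restrict_of_ae hφ] with z h₁ h₂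
      rwa [h₁]
    obtain ⟨W, hW⟩ := hyp (μ.restrict K) hν (hsing.restrict K)
      (@Measure.restrict.instNullSingletonClass _ _ μ hna K) _ (coeFn_mulZ _) _ hre
      ⟨ψ, hJφ.trans hψ⟩ (J.adjoint ∘L A ∘L J) (by
        simpa only [J, Lp.adjoint_extendByZero, LpToLpRestrictCLM_oneLp] using
          adjoint_comp_comp_sub_comm hJ hcomm)
    exact ⟨_, by simpa only [inner_Wminus_adjoint_comp_comp S U A _ hJ, J,
      LinearIsometry.coe_toContinuousLinearMap] using hW f₁ f₂⟩
  refine exists_forall_tendsto_inner_of_forall_exists (norm_Wminus_le S U A) fun h₁ h₂ =>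
    exists_tendsto_inner_of_forall_approx (norm_Wminus_le S U A) h₁ h₂ fun ε hε => ?_
  obtain ⟨η₁, hη₁, hh₁⟩ := Lp.exists_norm_sub_extendByZero_le (𝕜 := ℂ) (by simp) h₁ hε
  obtain ⟨η₂, hη₂, hh₂⟩ := Lp.exists_norm_sub_extendByZero_le (𝕜 := ℂ) (by simp) h₂ hε
  obtain ⟨K, hK, hμK, hφK⟩ :=
    Lp.exists_isClosed_measure_compl_le_continuousOn (by simp) φ (lt_min hη₁ hη₂)
  obtain ⟨ψ, hψ⟩ := exists_continuousMap_ae_eq_restrict hK hφK hφ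
  exact ⟨_, _, hh₁ K hK.measurableSet (hμK.trans (ENNReal.ofReal_le_ofReal (min_le_left _ _))),
    hh₂ K hK.measurableSet (hμK.trans (ENNReal.ofReal_le_ofReal (min_le_right _ _))),
    ((Lp.extendByZero ℂ _).norm_map _).trans_le (norm_Lp_toLp_restrict_le K h₁),
    hlocal K hK ψ hψ _ _⟩

end
end

section
/- Let μ be a Borel probability measure on the unit circle 𝕋 and let φ ∈ L²(μ) be real-valued. Then for every r ∈ (0,1), ‖P_r φ‖_{L²(μ)} ≤ 2‖C_r φ‖_{L²(μ)} + ‖φ‖_{L²(μ)}, where (P_r φ)(z) = ∫_𝕋 (φ(ξ) − φ(z)) · (1 − r²)/|1 − r·conj(ξ)·z|² dμ(ξ) and (C_r φ)(z) = ∫_𝕋 (φ(ξ) − φ(z)) / (1 − r·conj(ξ)·z) dμ(ξ). -/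
/-! With `w = r conj(ξ) z`, the Poisson kernel is `(1 - |w|²)/|1 - w|² = 2 Re (1 - w)⁻¹ - 1`.
Integrating against `φ(ξ) - φ(z)` gives `P_r φ = 2 Re C_r φ + (φ - ∫ φ dμ)` pointwise, and the
triangle inequality in `L²` finishes, since `‖φ - ∫ φ dμ‖₂ ≤ ‖φ‖₂` (variance is at most the
second moment). -/

open MeasureTheory Filter Topology ComplexConjugate

noncomputable section

/-- The Poisson average
`(P_r φ)(z) = ∫ (φ(ξ) - φ(z)) (1 - r²)/|1 - r conj(ξ) z|² dμ(ξ)`. -/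
def poissonAvg (μ : Measure Circle) (φ : Circle → ℝ) (r : ℝ) (z : Circle) : ℝ :=
  ∫ ξ, (φ ξ - φ z) *
    ((1 - r ^ 2) / ‖(1 : ℂ) - (r : ℂ) * conj ((ξ : Circle) : ℂ) * ((z : Circle) : ℂ)‖ ^ 2) ∂μ

/-- The Cauchy average `(C_r f)(z) = ∫ (f(ξ) - f(z)) / (1 - r conj(ξ) z) dμ(ξ)`. -/
def cauchyAvg (μ : Measure Circle) (f : Circle → ℂ) (r : ℝ) (z : Circle) : ℂ :=
  ∫ ξ, (f ξ - f z) / ((1 : ℂ) - (r : ℂ) * conj ((ξ : Circle) : ℂ) * ((z : Circle) : ℂ)) ∂μ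

lemma one_sub_norm_sq_div_norm_one_sub_sq {w : ℂ} (hw : w ≠ 1) :
    (1 - ‖w‖ ^ 2) / ‖1 - w‖ ^ 2 = 2 * (1 - w)⁻¹.re - 1 := by
  have hw' : Complex.normSq (1 - w) ≠ 0 := by simpa [sub_eq_zero] using hw.symm
  rw [Complex.inv_re, ← Complex.normSq_eq_norm_sq, ← Complex.normSq_eq_norm_sq]
  field_simp
  simp only [Complex.normSq_apply, Complex.sub_re, Complex.sub_im, Complex.one_re, Complex.one_im]
  ring

section CircleKernel

variable (ξ z : Circle)

lemma norm_ofReal_mul_conj_mul (r : ℝ) : ‖(r : ℂ) * conj (ξ : ℂ) * z‖ = |r| := by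
  simp [Circle.norm_coe, Complex.norm_real]

lemma one_sub_abs_le_norm_one_sub_mul_conj_mul (r : ℝ) :
    1 - |r| ≤ ‖1 - (r : ℂ) * conj (ξ : ℂ) * z‖ := by
  have := norm_sub_norm_le (1 : ℂ) ((r : ℂ) * conj (ξ : ℂ) * z)
  rwa [norm_one, norm_ofReal_mul_conj_mul] at this

lemma one_sub_mul_conj_mul_ne_zero {r : ℝ} (hr : |r| < 1) : 1 - (r : ℂ) * conj (ξ : ℂ) * z ≠ 0 := by
  rw [← norm_pos_iff]
  linarith [one_sub_abs_le_norm_one_sub_mul_conj_mul ξ z r]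

lemma norm_inv_one_sub_mul_conj_mul_le {r : ℝ} (hr : |r| < 1) :
    ‖(1 - (r : ℂ) * conj (ξ : ℂ) * z)⁻¹‖ ≤ (1 - |r|)⁻¹ := by
  rw [norm_inv]
  exact inv_anti₀ (by linarith) (one_sub_abs_le_norm_one_sub_mul_conj_mul ξ z r)

end CircleKernel

section Averages

variable {μ : Measure Circle} {r : ℝ}

lemma integrable_cauchy_integrand [IsFiniteMeasure μ] {f : Circle → ℂ} (hf : Integrable f μ)
    (hr : |r| < 1) (z : Circle) :
    Integrable (fun ξ => (f ξ - f z) / (1 - (r : ℂ) * conj (ξ : ℂ) * z)) μ := by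
  simp only [div_eq_mul_inv]
  refine (hf.sub (integrable_const _)).mul_bdd ?_
    (.of_forall fun ξ => norm_inv_one_sub_mul_conj_mul_le ξ z hr)
  have hcont : Continuous fun ξ : Circle => 1 - (r : ℂ) * conj (ξ : ℂ) * z := by fun_prop
  exact (hcont.inv₀ fun ξ => one_sub_mul_conj_mul_ne_zero ξ z hr).aestronglyMeasurable

lemma aestronglyMeasurable_cauchyAvg [SFinite μ] {f : Circle → ℂ}
    (hf : AEStronglyMeasurable f μ) (r : ℝ) : AEStronglyMeasurable (cauchyAvg μ f r) μ := by
  -- A measurable representative `g` of `f` changes `cauchyAvg` only on a null set.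
  set g := hf.mk f
  have hg : StronglyMeasurable (cauchyAvg μ g r) := by
    refine StronglyMeasurable.integral_prod_left (f := fun ξ z => (g ξ - g z) /
      (1 - (r : ℂ) * conj (ξ : ℂ) * z)) (Measurable.stronglyMeasurable ?_)
    have := hf.stronglyMeasurable_mk.measurable
    fun_prop
  refine ⟨cauchyAvg μ g r, hg, ?_⟩
  filter_upwards [hf.ae_eq_mk] with z hz
  refine integral_congr_ae ?_
  filter_upwards [hf.ae_eq_mk] with ξ hξ
  rw [hz, hξ]

lemma poissonAvg_eq_two_mul_re_cauchyAvg_add [IsProbabilityMeasure μ] {φ : Circle → ℝ}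
    (hφ : Integrable φ μ) (hr : |r| < 1) (z : Circle) :
    poissonAvg μ φ r z
      = 2 * (cauchyAvg μ (fun z => (φ z : ℂ)) r z).re + (φ z - ∫ ξ, φ ξ ∂μ) := by
  have hC := integrable_cauchy_integrand hφ.ofReal hr z
  have hCre : Integrable
      (fun ξ => 2 * (((φ ξ : ℂ) - φ z) / (1 - (r : ℂ) * conj (ξ : ℂ) * z)).re) μ :=
    (Complex.reCLM.integrable_comp hC).const_mul 2
  have hφz : Integrable (fun ξ => φ ξ - φ z) μ := hφ.sub (integrable_const _)
  have hre : ∫ ξ, (((φ ξ : ℂ) - φ z) / (1 - (r : ℂ) * conj (ξ : ℂ) * z)).re ∂μ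
      = (∫ ξ, ((φ ξ : ℂ) - φ z) / (1 - (r : ℂ) * conj (ξ : ℂ) * z) ∂μ).re :=
    integral_re hC
  have hkernel : ∀ ξ : Circle,
      (φ ξ - φ z) * ((1 - r ^ 2) / ‖1 - (r : ℂ) * conj (ξ : ℂ) * z‖ ^ 2)
        = 2 * (((φ ξ : ℂ) - φ z) / (1 - (r : ℂ) * conj (ξ : ℂ) * z)).re - (φ ξ - φ z) := by
    intro ξ
    have hw : (r : ℂ) * conj (ξ : ℂ) * z ≠ 1 :=
      (sub_ne_zero.1 (one_sub_mul_conj_mul_ne_zero ξ z hr)).symm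
    rw [← sq_abs r, ← norm_ofReal_mul_conj_mul ξ z r, one_sub_norm_sq_div_norm_one_sub_sq hw,
      div_eq_mul_inv, ← Complex.ofReal_sub, Complex.re_ofReal_mul]
    ring
  unfold poissonAvg cauchyAvg
  simp_rw [hkernel]
  rw [integral_sub hCre hφz, integral_const_mul, hre, integral_sub hφ (integrable_const _),
    integral_const]
  simp only [probReal_univ, one_smul]
  ring

end Averages

lemma eLpNorm_sub_integral_le {Ω : Type*} [MeasurableSpace Ω] {μ : Measure Ω}
    [IsProbabilityMeasure μ] {X : Ω → ℝ} (hX : AEStronglyMeasurable X μ) :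
    eLpNorm (fun ω => X ω - ∫ ω', X ω' ∂μ) 2 μ ≤ eLpNorm X 2 μ := by
  simp only [eLpNorm_eq_lintegral_rpow_enorm_toReal two_ne_zero ENNReal.ofNat_ne_top,
    ENNReal.toReal_ofNat, ENNReal.rpow_two]
  refine ENNReal.rpow_le_rpow ?_ (by norm_num)
  calc ∫⁻ ω, ‖X ω - ∫ ω', X ω' ∂μ‖ₑ ^ 2 ∂μ = ProbabilityTheory.evariance X μ := rfl
    _ = ∫⁻ ω, ‖X ω‖ₑ ^ 2 ∂μ - ENNReal.ofReal ((∫ ω, X ω ∂μ) ^ 2) :=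
      ProbabilityTheory.evariance_def' hX
    _ ≤ ∫⁻ ω, ‖X ω‖ₑ ^ 2 ∂μ := tsub_le_self

/-- For a Borel probability measure `μ` on the circle and a
real-valued `φ ∈ L²(μ)`, for every `r ∈ (0,1)` one has
`‖P_r φ‖_{L²(μ)} ≤ 2 ‖C_r φ‖_{L²(μ)} + ‖φ‖_{L²(μ)}`. -/
theorem poisson_average_norm_le_cauchy_average_norm
    (μ : Measure Circle) [IsProbabilityMeasure μ]
    (φ : Circle → ℝ) (hφ : MemLp φ 2 μ)
    (r : ℝ) (hr : r ∈ Set.Ioo (0 : ℝ) 1) :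
    eLpNorm (poissonAvg μ φ r) 2 μ
      ≤ 2 * eLpNorm (cauchyAvg μ (fun z => ((φ z : ℝ) : ℂ)) r) 2 μ
        + eLpNorm φ 2 μ := by
  set C := cauchyAvg μ (fun z => ((φ z : ℝ) : ℂ)) r
  have hr' : |r| < 1 := abs_lt.2 ⟨by linarith [hr.1], hr.2⟩
  have hP : poissonAvg μ φ r
      = (2 : ℝ) • (fun z => (C z).re) + fun z => φ z - ∫ ξ, φ ξ ∂μ :=
    funext (poissonAvg_eq_two_mul_re_cauchyAvg_add (hφ.integrable one_le_two) hr')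
  have hC : AEStronglyMeasurable C μ :=
    aestronglyMeasurable_cauchyAvg (Complex.continuous_ofReal.comp_aestronglyMeasurable hφ.1) r
  calc eLpNorm (poissonAvg μ φ r) 2 μ
      ≤ eLpNorm ((2 : ℝ) • fun z => (C z).re) 2 μ + eLpNorm (fun z => φ z - ∫ ξ, φ ξ ∂μ) 2 μ :=
        hP ▸ eLpNorm_add_le ((Complex.continuous_re.comp_aestronglyMeasurable hC).const_smul _)
          (hφ.1.sub aestronglyMeasurable_const) one_le_two
    _ ≤ 2 * eLpNorm C 2 μ + eLpNorm φ 2 μ := by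
        rw [eLpNorm_const_smul]
        gcongr
        · simpa using (Real.enorm_natCast 2).le
        · exact eLpNorm_mono fun z => Complex.abs_re_le_norm (C z)
        · exact eLpNorm_sub_integral_le hφ.1
end
end

section
/- Let {p_{α,n}} (α ∈ E, n ∈ ℕ) be an s-regular summation method. Then for every complex number z with |z| = 1 and z ≠ 1, the net α ↦ Σ_{n=0}^∞ p_{α,n} z^{n} converges to 0 along the atTop filter on E. -/
open MeasureTheory Filter Topology ComplexConjugate

noncomputable section

/-!
Summation by parts: `(1 - z) Σ aₙ zⁿ = a₀ + Σ (aₙ₊₁ - aₙ) zⁿ⁺¹`. For `‖z‖ ≤ 1` the right-hand side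
is bounded by `‖a₀‖` plus the total variation of `a`, and both tend to `0` for an s-regular method;
dividing by `1 - z ≠ 0` gives the claim.
-/

section SummationByParts

variable {𝕜 : Type*} [NormedField 𝕜] {a : ℕ → 𝕜} {z : 𝕜}

theorem one_sub_mul_tsum_mul_pow (h : Summable fun n => a n * z ^ n) :
    (1 - z) * ∑' n, a n * z ^ n = a 0 + ∑' n, (a (n + 1) - a n) * z ^ (n + 1) := by
  have h_shift : Summable fun n => a (n + 1) * z ^ (n + 1) :=
    (summable_nat_add_iff (f := fun n => a n * z ^ n) 1).2 h
  calc (1 - z) * ∑' n, a n * z ^ n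
      = a 0 + (∑' n, a (n + 1) * z ^ (n + 1) - ∑' n, z * (a n * z ^ n)) := by
        rw [h.tsum_mul_left, h.tsum_eq_zero_add]; ring
    _ = a 0 + ∑' n, (a (n + 1) - a n) * z ^ (n + 1) := by
        rw [← h_shift.tsum_sub (h.mul_left z)]
        congr 1
        exact tsum_congr fun n => by ring

theorem summable_norm_sub_succ (ha : Summable fun n => ‖a n‖) :
    Summable fun n => ‖a n - a (n + 1)‖ :=
  .of_nonneg_of_le (fun _ => norm_nonneg _) (fun _ => norm_sub_le _ _)
    (ha.add ((summable_nat_add_iff (f := fun n => ‖a n‖) 1).2 ha))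

variable [CompleteSpace 𝕜]

theorem norm_one_sub_mul_tsum_mul_pow_le (ha : Summable fun n => ‖a n‖) (hz : ‖z‖ ≤ 1) :
    ‖(1 - z) * ∑' n, a n * z ^ n‖ ≤ ‖a 0‖ + ∑' n, ‖a n - a (n + 1)‖ := by
  have h_term : ∀ n, ‖(a (n + 1) - a n) * z ^ (n + 1)‖ ≤ ‖a n - a (n + 1)‖ := fun n => by
    rw [norm_mul, norm_sub_rev, norm_pow]
    exact mul_le_of_le_one_right (norm_nonneg _) (pow_le_one₀ (norm_nonneg _) hz)
  have h_summable : Summable fun n => a n * z ^ n :=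
    .of_norm_bounded ha fun n => by
      rw [norm_mul, norm_pow]
      exact mul_le_of_le_one_right (norm_nonneg _) (pow_le_one₀ (norm_nonneg _) hz)
  rw [one_sub_mul_tsum_mul_pow h_summable]
  refine (norm_add_le _ _).trans ?_
  gcongr
  exact tsum_of_norm_bounded (summable_norm_sub_succ ha).hasSum h_term

theorem tendsto_tsum_mul_pow_zero {ι : Type*} {l : Filter ι} {a : ι → ℕ → 𝕜}
    (ha : ∀ i, Summable fun n => ‖a i n‖) (hz : ‖z‖ ≤ 1) (hz1 : z ≠ 1)
    (h_zero : Tendsto (fun i => ‖a i 0‖) l (𝓝 0))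
    (h_var : Tendsto (fun i => ∑' n, ‖a i n - a i (n + 1)‖) l (𝓝 0)) :
    Tendsto (fun i => ∑' n, a i n * z ^ n) l (𝓝 0) := by
  have h_mul : Tendsto (fun i => (1 - z) * ∑' n, a i n * z ^ n) l (𝓝 0) := by
    refine tendsto_zero_iff_norm_tendsto_zero.2 <| squeeze_zero (fun _ => norm_nonneg _)
      (fun i => norm_one_sub_mul_tsum_mul_pow_le (ha i) hz) ?_
    simpa using h_zero.add h_var
  have h_ne : (1 - z) ≠ 0 := sub_ne_zero.2 hz1.symm
  simpa [inv_mul_cancel_left₀ h_ne] using h_mul.const_mul (1 - z)⁻¹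

end SummationByParts

theorem sregular_averages_unimodular_geometric_to_zero_general
    {E : Type*} [LinearOrder E] (S : SRegular E)
    (z : ℂ) (hz : ‖z‖ = 1) (hz1 : z ≠ 1) :
    Tendsto (fun α => ∑' n : ℕ, (S.p α n : ℂ) * z ^ n) atTop (𝓝 0) := by
  have h_norm : ∀ α n, ‖(S.p α n : ℂ)‖ = S.p α n := fun α n => by
    rw [Complex.norm_real, Real.norm_of_nonneg (S.nonneg α n)]
  refine tendsto_tsum_mul_pow_zero (fun α => ?_) hz.le hz1 ?_ ?_
  · simpa only [h_norm] using (S.hasSum_one α).summable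
  · simpa only [h_norm] using S.tendsto_eval 0
  · simpa only [← Complex.ofReal_sub, Complex.norm_real, Real.norm_eq_abs]
      using S.tendsto_variation

/-- An s-regular summation method averages every nonconstant
unimodular geometric progression to zero: for `|z| = 1`, `z ≠ 1`, the averages
`Σₙ p_{α,n} zⁿ` tend to `0` along `atTop` on `E`. -/
theorem sregular_averages_unimodular_geometric_to_zero
    {E : Type*} [LinearOrder E] [Nonempty E] (S : SRegular E)
    (z : ℂ) (hz : ‖z‖ = 1) (hz1 : z ≠ 1) :
    Tendsto (fun α => ∑' n : ℕ, (S.p α n : ℂ) * z ^ n) atTop (𝓝 0) :=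
  sregular_averages_unimodular_geometric_to_zero_general S z hz hz1
end
end

section
/- Let {p_{α,n}} (α ∈ E, n ∈ ℕ) be an s-regular summation method, X a complex Banach space, and {x_n} a norm-bounded sequence in X. Then the averages Σ_{n=0}^∞ p_{α,n} x_n converge in norm along atTop on E to some x ∈ X if and only if the averages Σ_{n=0}^∞ p_{α,n} x_{n+1} converge in norm along atTop on E, and in that case the two limits coincide. -/
/-!
Summation by parts gives
`∑ pₙ xₙ - ∑ pₙ xₙ₊₁ = p₀ x₀ - ∑ (pₙ - pₙ₊₁) xₙ₊₁`,
whose norm is at most `(p₀ + ∑ |pₙ - pₙ₊₁|) · sup ‖xₙ‖`. For an s-regular method both terms of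
this bound tend to `0`, so the two families of averages differ by a family tending to `0`:
one converges iff the other does, to the same limit.
-/

open MeasureTheory Filter Topology ComplexConjugate

noncomputable section

section ShiftedAverages

variable {X : Type*} [NormedAddCommGroup X] [NormedSpace ℝ X] {x : ℕ → X} {C : ℝ}

lemma norm_smul_le_abs_mul_of_norm_le (hx : ∀ n, ‖x n‖ ≤ C) (q : ℕ → ℝ) (n : ℕ) :
    ‖q n • x n‖ ≤ |q n| * C := by
  rw [norm_smul, Real.norm_eq_abs]
  exact mul_le_mul_of_nonneg_left (hx n) (abs_nonneg _)

lemma summable_smul_of_norm_le [CompleteSpace X] {q : ℕ → ℝ} (hq : Summable q)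
    (hx : ∀ n, ‖x n‖ ≤ C) : Summable fun n => q n • x n :=
  .of_norm_bounded ((summable_abs_iff.2 hq).mul_right C) (norm_smul_le_abs_mul_of_norm_le hx q)

lemma norm_tsum_smul_le {q : ℕ → ℝ} (hq : Summable q) (hx : ∀ n, ‖x n‖ ≤ C) :
    ‖∑' n, q n • x n‖ ≤ (∑' n, |q n|) * C :=
  tsum_of_norm_bounded ((summable_abs_iff.2 hq).hasSum.mul_right C)
    (norm_smul_le_abs_mul_of_norm_le hx q)

lemma tsum_smul_sub_tsum_smul_succ [CompleteSpace X] {p : ℕ → ℝ} (hp : Summable p)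
    (hx : ∀ n, ‖x n‖ ≤ C) :
    ∑' n, p n • x n - ∑' n, p n • x (n + 1) =
      p 0 • x 0 - ∑' n, (p n - p (n + 1)) • x (n + 1) := by
  have hpx : Summable fun n => p n • x n := summable_smul_of_norm_le hp hx
  have hpx_succ : Summable fun n => p n • x (n + 1) := summable_smul_of_norm_le hp fun n => hx _
  have hp_succ_x_succ : Summable fun n => p (n + 1) • x (n + 1) := (summable_nat_add_iff 1).2 hpx
  simp only [sub_smul]
  rw [hpx.tsum_eq_zero_add, hpx_succ.tsum_sub hp_succ_x_succ]
  abel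

lemma norm_tsum_smul_sub_tsum_smul_succ_le [CompleteSpace X] {p : ℕ → ℝ} (hp : Summable p)
    (hx : ∀ n, ‖x n‖ ≤ C) :
    ‖∑' n, p n • x n - ∑' n, p n • x (n + 1)‖ ≤
      |p 0| * C + (∑' n, |p n - p (n + 1)|) * C := by
  rw [tsum_smul_sub_tsum_smul_succ hp hx]
  exact (norm_sub_le _ _).trans <| add_le_add (norm_smul_le_abs_mul_of_norm_le hx p 0)
    (norm_tsum_smul_le (hp.sub ((summable_nat_add_iff 1).2 hp)) fun n => hx _)

lemma tendsto_tsum_smul_sub_tsum_smul_succ [CompleteSpace X] {ι : Type*} {l : Filter ι}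
    {p : ι → ℕ → ℝ} (hp : ∀ i, Summable (p i)) (hp₀ : Tendsto (fun i => p i 0) l (𝓝 0))
    (hvar : Tendsto (fun i => ∑' n, |p i n - p i (n + 1)|) l (𝓝 0)) (hx : ∀ n, ‖x n‖ ≤ C) :
    Tendsto (fun i => ∑' n, p i n • x n - ∑' n, p i n • x (n + 1)) l (𝓝 0) := by
  have hbound : Tendsto (fun i => |p i 0| * C + (∑' n, |p i n - p i (n + 1)|) * C) l (𝓝 0) := by
    simpa using (hp₀.abs.mul_const C).add (hvar.mul_const C)
  exact squeeze_zero_norm (fun i => norm_tsum_smul_sub_tsum_smul_succ_le (hp i) hx) hbound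

end ShiftedAverages

/-- Stability of s-regular summation methods: for a norm-bounded
sequence `xₙ` in a complex Banach space, the averages `Σₙ p_{α,n} xₙ` converge in
norm along `atTop` iff the averages `Σₙ p_{α,n} x_{n+1}` do, and the limits then
coincide. -/
theorem sregular_method_is_stable
    {E : Type*} [LinearOrder E] [Nonempty E] (S : SRegular E)
    {X : Type*} [NormedAddCommGroup X] [NormedSpace ℂ X] [CompleteSpace X]
    (x : ℕ → X) (hbdd : ∃ C : ℝ, ∀ n, ‖x n‖ ≤ C) :
    ((∃ y : X, Tendsto (fun α => ∑' n : ℕ, S.p α n • x n) atTop (𝓝 y)) ↔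
      (∃ y : X, Tendsto (fun α => ∑' n : ℕ, S.p α n • x (n + 1)) atTop (𝓝 y))) ∧
    (∀ y₁ y₂ : X, Tendsto (fun α => ∑' n : ℕ, S.p α n • x n) atTop (𝓝 y₁) →
      Tendsto (fun α => ∑' n : ℕ, S.p α n • x (n + 1)) atTop (𝓝 y₂) → y₁ = y₂) := by
  obtain ⟨C, hC⟩ := hbdd
  have hdiff := tendsto_tsum_smul_sub_tsum_smul_succ (fun α => (S.hasSum_one α).summable)
    (S.tendsto_eval 0) S.tendsto_variation hC
  refine ⟨⟨fun ⟨y, hy⟩ => ⟨y, by simpa using hy.sub hdiff⟩,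
    fun ⟨y, hy⟩ => ⟨y, by simpa using hdiff.add hy⟩⟩, fun y₁ y₂ h₁ h₂ => ?_⟩
  exact tendsto_nhds_unique (by simpa using h₁.sub hdiff) h₂
end
end

section
/- Let H be a complex Hilbert space, U a unitary operator on H, A a bounded operator on H, and {p_{α,n}} an s-regular summation method; let W₊(α) = Σ_{n=0}^∞ p_{α,n} U^{−n}AU^{n}. Then for every α ∈ E with Σ_{n=0}^∞ |p_{α,n} − p_{α,n+1}| < ∞, one has U^{−1} W₊(α) U = W₊(α) − p_{α,0}·A + Σ_{n=0}^∞ (p_{α,n} − p_{α,n+1})·U^{−n−1} A U^{n+1}, where the series on the right converges absolutely in operator norm. -/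
open MeasureTheory Filter Topology ComplexConjugate

noncomputable section

/-!
Writing `Tₖ = U⁻ᵏ A Uᵏ`, conjugation by `U` shifts `Tₖ` to `Tₖ₊₁`, so `U⁻¹ W₊(α) U = Σₙ pₙ Tₙ₊₁`.
Splitting `pₙ = pₙ₊₁ + (pₙ - pₙ₊₁)` turns this into `(W₊(α) - p₀ A) + Σₙ (pₙ - pₙ₊₁) Tₙ₊₁`,
an Abel summation by parts. Every `Tₖ` has norm `‖A‖`, and a summable real sequence is absolutely
summable, so all series involved converge absolutely.
-/

section SummationByParts

variable {𝕜 X : Type*} [Ring 𝕜] [AddCommGroup X] [Module 𝕜 X] [TopologicalSpace X]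
  [IsTopologicalAddGroup X] [T2Space X]

theorem tsum_smul_succ_eq_sub_add (p : ℕ → 𝕜) (x : ℕ → X)
    (hx : Summable fun n => p n • x n) (hd : Summable fun n => (p n - p (n + 1)) • x (n + 1)) :
    ∑' n, p n • x (n + 1)
      = (∑' n, p n • x n) - p 0 • x 0 + ∑' n, (p n - p (n + 1)) • x (n + 1) := by
  have hsplit : (fun n => p n • x (n + 1))
      = fun n => p (n + 1) • x (n + 1) + (p n - p (n + 1)) • x (n + 1) := by
    funext n
    rw [← add_smul, add_sub_cancel]
  rw [hsplit, ((summable_nat_add_iff 1).2 hx).tsum_add hd, hx.tsum_eq_zero_add]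
  abel

end SummationByParts

theorem Summable.abs_sub_succ {p : ℕ → ℝ} (hp : Summable p) :
    Summable fun n => |p n - p (n + 1)| :=
  (hp.sub ((summable_nat_add_iff 1).2 hp)).abs

theorem Summable.norm_smul_of_norm_le {ι X : Type*} [NormedAddCommGroup X] [NormedSpace ℝ X]
    {c : ι → ℝ} {x : ι → X} {C : ℝ} (hc : Summable fun i => |c i|) (hx : ∀ i, ‖x i‖ ≤ C) :
    Summable fun i => ‖c i • x i‖ :=
  (hc.mul_right C).of_nonneg_of_le (fun _ => norm_nonneg _) fun i => by
    rw [norm_smul, Real.norm_eq_abs]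
    exact mul_le_mul_of_nonneg_left (hx i) (abs_nonneg _)

section UnitaryConj

variable {R : Type*}

def unitaryConj [Monoid R] [StarMul R] (U : unitary R) (k : ℤ) (a : R) : R :=
  ((U ^ (-k) : unitary R) : R) * a * ((U ^ k : unitary R) : R)

theorem unitaryConj_zero [Monoid R] [StarMul R] (U : unitary R) (a : R) :
    unitaryConj U 0 a = a := by
  simp [unitaryConj]

theorem coe_inv_mul_unitaryConj_mul [Monoid R] [StarMul R] (U : unitary R) (k : ℤ) (a : R) :
    ((U⁻¹ : unitary R) : R) * unitaryConj U k a * (U : R) = unitaryConj U (k + 1) a := by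
  have hleft : ((U⁻¹ : unitary R) : R) * ((U ^ (-k) : unitary R) : R)
      = ((U ^ (-(k + 1)) : unitary R) : R) := by
    rw [← Submonoid.coe_mul, ← zpow_neg_one, ← zpow_add, neg_add_rev]
  have hright : ((U ^ k : unitary R) : R) * (U : R) = ((U ^ (k + 1) : unitary R) : R) := by
    rw [← Submonoid.coe_mul, zpow_add_one]
  simp only [unitaryConj, mul_assoc, hright]
  rw [← mul_assoc, hleft]

theorem norm_unitaryConj [NormedRing R] [StarRing R] [CStarRing R] (U : unitary R) (k : ℤ)
    (a : R) : ‖unitaryConj U k a‖ = ‖a‖ := by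
  rw [unitaryConj, CStarRing.norm_mul_coe_unitary, CStarRing.norm_coe_unitary_mul]

variable [NormedRing R] [StarRing R] [CStarRing R] [NormedAlgebra ℝ R] [CompleteSpace R]

theorem coe_inv_mul_tsum_smul_unitaryConj_mul (U : unitary R) (a : R) {p : ℕ → ℝ}
    (hp : Summable p) :
    Summable (fun n : ℕ => ‖(p n - p (n + 1)) • unitaryConj U (n + 1) a‖) ∧
    ((U⁻¹ : unitary R) : R) * (∑' n : ℕ, p n • unitaryConj U n a) * (U : R)
      = (∑' n : ℕ, p n • unitaryConj U n a) - p 0 • a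
        + ∑' n : ℕ, (p n - p (n + 1)) • unitaryConj U (n + 1) a := by
  have hbound (k : ℤ) : ‖unitaryConj U k a‖ ≤ ‖a‖ := (norm_unitaryConj U k a).le
  have hW : Summable fun n : ℕ => p n • unitaryConj U n a :=
    (hp.abs.norm_smul_of_norm_le fun n => hbound n).of_norm
  have hD : Summable fun n : ℕ => ‖(p n - p (n + 1)) • unitaryConj U (n + 1) a‖ :=
    hp.abs_sub_succ.norm_smul_of_norm_le fun n => hbound (n + 1)
  refine ⟨hD, ?_⟩
  calc ((U⁻¹ : unitary R) : R) * (∑' n : ℕ, p n • unitaryConj U n a) * (U : R)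
      = ∑' n : ℕ, p n • unitaryConj U ((n + 1 : ℕ) : ℤ) a := by
        rw [← hW.tsum_mul_left, ← (hW.mul_left _).tsum_mul_right]
        congr 1 with n
        rw [mul_smul_comm, smul_mul_assoc, coe_inv_mul_unitaryConj_mul, Nat.cast_succ]
    _ = _ := by
        rw [tsum_smul_succ_eq_sub_add p (fun n => unitaryConj U n a) hW
          (by exact_mod_cast hD.of_norm)]
        simp only [Nat.cast_zero, unitaryConj_zero, Nat.cast_succ]

end UnitaryConj

theorem conjugated_future_wave_operator_formula_general
    {E : Type*} [LinearOrder E] (S : SRegular E)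
    {H : Type*} [NormedAddCommGroup H] [InnerProductSpace ℂ H] [CompleteSpace H]
    (U : unitary (H →L[ℂ] H)) (A : H →L[ℂ] H) (α : E) :
    Summable (fun n : ℕ => ‖(S.p α n - S.p α (n + 1)) •
      (((U ^ (-((n : ℤ) + 1)) : unitary (H →L[ℂ] H)) : H →L[ℂ] H) ∘L A ∘L
        ((U ^ ((n : ℤ) + 1) : unitary (H →L[ℂ] H)) : H →L[ℂ] H))‖) ∧
    ((U⁻¹ : unitary (H →L[ℂ] H)) : H →L[ℂ] H) ∘L Wplus S U A α ∘L (U : H →L[ℂ] H)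
      = Wplus S U A α - S.p α 0 • A
        + ∑' n : ℕ, (S.p α n - S.p α (n + 1)) •
            (((U ^ (-((n : ℤ) + 1)) : unitary (H →L[ℂ] H)) : H →L[ℂ] H) ∘L A ∘L
              ((U ^ ((n : ℤ) + 1) : unitary (H →L[ℂ] H)) : H →L[ℂ] H)) :=
  coe_inv_mul_tsum_smul_unitaryConj_mul U A (S.hasSum_one α).summable

/-- For a unitary `U` and bounded `A` on a complex Hilbert space and
an s-regular summation method, for every `α` with `Σₙ |p_{α,n} - p_{α,n+1}| < ∞`, the
series `Σₙ (p_{α,n} - p_{α,n+1}) U^{-n-1} A U^{n+1}` converges absolutely in operator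
norm and `U⁻¹ W₊(α) U = W₊(α) - p_{α,0} A + Σₙ (p_{α,n} - p_{α,n+1}) U^{-n-1} A U^{n+1}`. -/
theorem conjugated_future_wave_operator_formula
    {E : Type*} [LinearOrder E] [Nonempty E] (S : SRegular E)
    {H : Type*} [NormedAddCommGroup H] [InnerProductSpace ℂ H] [CompleteSpace H]
    (U : unitary (H →L[ℂ] H)) (A : H →L[ℂ] H) (α : E)
    (hvar : Summable fun n : ℕ => |S.p α n - S.p α (n + 1)|) :
    Summable (fun n : ℕ => ‖(S.p α n - S.p α (n + 1)) •
      (((U ^ (-((n : ℤ) + 1)) : unitary (H →L[ℂ] H)) : H →L[ℂ] H) ∘L A ∘L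
        ((U ^ ((n : ℤ) + 1) : unitary (H →L[ℂ] H)) : H →L[ℂ] H))‖) ∧
    ((U⁻¹ : unitary (H →L[ℂ] H)) : H →L[ℂ] H) ∘L Wplus S U A α ∘L (U : H →L[ℂ] H)
      = Wplus S U A α - S.p α 0 • A
        + ∑' n : ℕ, (S.p α n - S.p α (n + 1)) •
            (((U ^ (-((n : ℤ) + 1)) : unitary (H →L[ℂ] H)) : H →L[ℂ] H) ∘L A ∘L
              ((U ^ ((n : ℤ) + 1) : unitary (H →L[ℂ] H)) : H →L[ℂ] H)) :=
  conjugated_future_wave_operator_formula_general S U A α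
end
end
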